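/- arXiv:2207.01897 — 3 statements merged into one kernel-verified Lean document; each statement's English description precedes it below -/
import Mathlib

section
/- Let (V, m) be a σ-finite measure space, k : V × V → [0,∞) measurable, and σ(w) = ∫_V k(v, w) dm(v) assumed finite for a.e. w. For δ > 0 set Σ_δ = {v ∈ V : σ(v) ≤ δ} and define the truncated operator (K̄^{(δ)} f)(v) = 1_{Σ_δ}(v) ∫_V k(v, w) f(w) dm(w). If for some integer n ≥ 0 the function ϑₙ(w) = σ(w)^{-1} ∫_V σ(v)^{-n} k(v, w) dm(v) is essentially bounded, then for every f with ∫_V σ(w)|f(w)| dm(w) < ∞ one has ∫_V |K̄^{(δ)} f(v)| dm(v) ≤ δⁿ ‖ϑₙ‖_∞ ∫_V σ(w)|f(w)| dm(w). -/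
/-!
By Tonelli, `∫ |K̄^{(δ)} f| = ∫ f(w) (∫_{Σ_δ} k(v, w) dm(v)) dm(w)`. On `Σ_δ` we have
`1 ≤ δⁿ σ(v)⁻ⁿ`, so the inner integral is at most `δⁿ ∫ σ(v)⁻ⁿ k(v, w) dm(v) = δⁿ σ(w) ϑₙ(w)`,
which is bounded by `δⁿ C σ(w)`.
-/

open MeasureTheory ENNReal

lemma ENNReal.one_le_pow_mul_inv_pow_of_le {s δ : ℝ≥0∞} (hδ : 0 < δ) (hs : s ≠ ⊤) (hsδ : s ≤ δ)
    (n : ℕ) : 1 ≤ δ ^ n * (s ^ n)⁻¹ := by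
  rw [← div_eq_mul_inv, ENNReal.le_div_iff_mul_le (Or.inr (pow_ne_zero n hδ.ne'))
    (Or.inl (pow_ne_top hs)), one_mul]
  exact pow_le_pow_left' hsδ n

lemma lintegral_indicator_lintegral_mul_eq {α β : Type*} [MeasurableSpace α] [MeasurableSpace β]
    {μ : Measure α} {ν : Measure β} [SFinite μ] [SFinite ν] {k : α → β → ℝ≥0∞}
    (hk : Measurable (fun p : α × β => k p.1 p.2)) {f : β → ℝ≥0∞} (hf : Measurable f)
    {s : Set α} (hs : MeasurableSet s) :
    ∫⁻ x, s.indicator (fun x => ∫⁻ y, k x y * f y ∂ν) x ∂μ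
      = ∫⁻ y, (∫⁻ x in s, k x y ∂μ) * f y ∂ν := by
  rw [lintegral_indicator hs,
    lintegral_lintegral_swap (hk.mul (hf.comp measurable_snd)).aemeasurable]
  exact lintegral_congr fun y =>
    lintegral_mul_const _ (hk.comp (measurable_id.prodMk measurable_const))

lemma setLIntegral_sublevel_le_pow_mul_lintegral {α : Type*} [MeasurableSpace α] {μ : Measure α}
    {σ g : α → ℝ≥0∞} (hσ : Measurable σ) (hσfin : ∀ᵐ x ∂μ, σ x < ⊤) (hg : Measurable g)
    {δ : ℝ≥0∞} (hδ : 0 < δ) (n : ℕ) :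
    ∫⁻ x in {x | σ x ≤ δ}, g x ∂μ ≤ δ ^ n * ∫⁻ x, (σ x ^ n)⁻¹ * g x ∂μ := by
  have hpointwise : ∀ᵐ x ∂μ, x ∈ {x | σ x ≤ δ} → g x ≤ δ ^ n * ((σ x ^ n)⁻¹ * g x) := by
    filter_upwards [hσfin] with x hx hxδ
    rw [← mul_assoc]
    exact le_mul_of_one_le_left' (ENNReal.one_le_pow_mul_inv_pow_of_le hδ hx.ne hxδ n)
  calc ∫⁻ x in {x | σ x ≤ δ}, g x ∂μ
      ≤ ∫⁻ x in {x | σ x ≤ δ}, δ ^ n * ((σ x ^ n)⁻¹ * g x) ∂μ :=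
        setLIntegral_mono_ae' (hσ measurableSet_Iic) hpointwise
    _ ≤ ∫⁻ x, δ ^ n * ((σ x ^ n)⁻¹ * g x) ∂μ := setLIntegral_le_lintegral _ _
    _ = δ ^ n * ∫⁻ x, (σ x ^ n)⁻¹ * g x ∂μ :=
        lintegral_const_mul _ ((hσ.pow_const n).inv.mul hg)

theorem stmt3_general {V : Type*} [MeasurableSpace V] (m : Measure V) [SigmaFinite m]
    (κ : V → V → ℝ≥0∞) (hκ : Measurable (fun p : V × V => κ p.1 p.2))
    (σ : V → ℝ≥0∞) (hσ : ∀ w, σ w = ∫⁻ v, κ v w ∂m)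
    (hσfin : ∀ᵐ w ∂m, σ w < ⊤)
    (f : V → ℝ≥0∞) (hf : Measurable f)
    (n : ℕ) (C : ℝ≥0∞)
    (hϑ : ∀ᵐ w ∂m, (σ w)⁻¹ * ∫⁻ v, ((σ v) ^ n)⁻¹ * κ v w ∂m ≤ C)
    (δ : ℝ≥0∞) (hδ : 0 < δ) :
    ∫⁻ v, Set.indicator {v' : V | σ v' ≤ δ} (fun v' => ∫⁻ w, κ v' w * f w ∂m) v ∂m
      ≤ δ ^ n * C * ∫⁻ w, σ w * f w ∂m := by
  have hσm : Measurable σ := funext hσ ▸ hκ.lintegral_prod_left'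
  have hcolumn : ∀ᵐ w ∂m, ∫⁻ v in {v' | σ v' ≤ δ}, κ v w ∂m ≤ δ ^ n * C * σ w := by
    filter_upwards [hϑ, hσfin] with w hϑw hσw
    rcases eq_or_ne (σ w) 0 with h0 | h0
    · calc ∫⁻ v in {v' | σ v' ≤ δ}, κ v w ∂m ≤ ∫⁻ v, κ v w ∂m := setLIntegral_le_lintegral _ _
        _ = 0 := by rw [← hσ, h0]
        _ ≤ δ ^ n * C * σ w := zero_le
    · rw [ENNReal.inv_mul_le_iff h0 hσw.ne] at hϑw
      calc ∫⁻ v in {v' | σ v' ≤ δ}, κ v w ∂m ≤ δ ^ n * ∫⁻ v, (σ v ^ n)⁻¹ * κ v w ∂m :=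
            setLIntegral_sublevel_le_pow_mul_lintegral hσm hσfin
              (hκ.comp (measurable_id.prodMk measurable_const)) hδ n
        _ ≤ δ ^ n * (σ w * C) := by gcongr
        _ = δ ^ n * C * σ w := by ring
  calc ∫⁻ v, Set.indicator {v' : V | σ v' ≤ δ} (fun v' => ∫⁻ w, κ v' w * f w ∂m) v ∂m
      = ∫⁻ w, (∫⁻ v in {v' | σ v' ≤ δ}, κ v w ∂m) * f w ∂m :=
        lintegral_indicator_lintegral_mul_eq hκ hf (hσm measurableSet_Iic)
    _ ≤ ∫⁻ w, δ ^ n * C * (σ w * f w) ∂m :=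
        lintegral_mono_ae (hcolumn.mono fun w hw => by rw [← mul_assoc]; gcongr)
    _ = δ ^ n * C * ∫⁻ w, σ w * f w ∂m := lintegral_const_mul _ (hσm.mul hf)

theorem stmt3 {V : Type*} [MeasurableSpace V] (m : Measure V) [SigmaFinite m]
    (κ : V → V → ℝ≥0∞) (hκ : Measurable (fun p : V × V => κ p.1 p.2))
    (σ : V → ℝ≥0∞) (hσ : ∀ w, σ w = ∫⁻ v, κ v w ∂m)
    (hσfin : ∀ᵐ w ∂m, σ w < ⊤)
    (f : V → ℝ≥0∞) (hf : Measurable f)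
    (n : ℕ) (C : ℝ≥0∞)
    (hϑ : ∀ᵐ w ∂m, (σ w)⁻¹ * ∫⁻ v, ((σ v) ^ n)⁻¹ * κ v w ∂m ≤ C)
    (δ : ℝ≥0∞) (hδ : 0 < δ)
    (hfin : ∫⁻ w, σ w * f w ∂m < ⊤) :
    ∫⁻ v, Set.indicator {v' : V | σ v' ≤ δ} (fun v' => ∫⁻ w, κ v' w * f w ∂m) v ∂m
      ≤ δ ^ n * C * ∫⁻ w, σ w * f w ∂m :=
  stmt3_general m κ hκ σ hσ hσfin f hf n C hϑ δ hδ
end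

section
/- Let B be a bounded operator on a complex Banach space, μ₀ ≠ 0, n ≥ 1, and set ν₀ = μ₀ⁿ. Suppose P₀ = lim_{z→ν₀} (z − ν₀) R(z, Bⁿ) exists in operator norm (i.e., ν₀ is a simple pole of R(·, Bⁿ) with residue P₀). Then the limit Π₀ = lim_{λ→μ₀} (λ − μ₀) R(λ, B) exists in operator norm and equals (1/(n μ₀^{n-1})) P₀ ∑_{j=0}^{n-1} μ₀^{n-1-j} B^j. In particular the range of Π₀ is contained in the range of P₀. -/
open Filter

theorem stmt8 {X : Type*} [NormedAddCommGroup X] [NormedSpace ℂ X] [CompleteSpace X]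
    (B : X →L[ℂ] X) (μ₀ : ℂ) (hμ : μ₀ ≠ 0) (n : ℕ) (hn : 1 ≤ n)
    (P₀ : X →L[ℂ] X) (ε : ℝ) (hε : 0 < ε)
    (hres : ∀ z : ℂ, z ≠ μ₀ ^ n → ‖z - μ₀ ^ n‖ < ε → z ∈ resolventSet ℂ (B ^ n))
    (hP : Tendsto (fun z : ℂ => (z - μ₀ ^ n) • resolvent (B ^ n) z)
      (nhdsWithin (μ₀ ^ n) {μ₀ ^ n}ᶜ) (nhds P₀)) :
    Tendsto (fun lam : ℂ => (lam - μ₀) • resolvent B lam) (nhdsWithin μ₀ {μ₀}ᶜ)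
        (nhds (((n : ℂ) * μ₀ ^ (n - 1))⁻¹ •
          (P₀ * ∑ j ∈ Finset.range n, μ₀ ^ (n - 1 - j) • B ^ j))) ∧
      Set.range ⇑(((n : ℂ) * μ₀ ^ (n - 1))⁻¹ •
          (P₀ * ∑ j ∈ Finset.range n, μ₀ ^ (n - 1 - j) • B ^ j)) ⊆ Set.range ⇑P₀ := by
  classical
  -- the scalar polynomial q
  set q : ℂ → ℂ := fun lam => ∑ i ∈ Finset.range n, lam ^ i * μ₀ ^ (n - 1 - i) with hq_def
  have hq_cont : Continuous q := by
    apply continuous_finset_sum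
    intro i _
    exact (continuous_pow i).mul continuous_const
  have hqμ : q μ₀ = (n : ℂ) * μ₀ ^ (n - 1) := by
    have : ∀ i ∈ Finset.range n, μ₀ ^ i * μ₀ ^ (n - 1 - i) = μ₀ ^ (n - 1) := by
      intro i hi
      rw [← pow_add]
      congr 1
      have hi' : i ≤ n - 1 := Nat.le_sub_one_of_lt (Finset.mem_range.mp hi)
      omega
    rw [hq_def]
    simp only [Finset.sum_congr rfl this, Finset.sum_const, Finset.card_range, nsmul_eq_mul]
  have hqμ0 : q μ₀ ≠ 0 := by
    rw [hqμ]
    exact mul_ne_zero (Nat.cast_ne_zero.mpr (by omega)) (pow_ne_zero _ hμ)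
  have hfac : ∀ lam : ℂ, q lam * (lam - μ₀) = lam ^ n - μ₀ ^ n := fun lam =>
    geom_sum₂_mul lam μ₀ n
  -- the operator-valued sum
  set S : ℂ → (X →L[ℂ] X) := fun lam => ∑ j ∈ Finset.range n, lam ^ (n - 1 - j) • B ^ j
    with hS_def
  have hS_cont : Continuous S := by
    apply continuous_finset_sum
    intro i _
    exact (continuous_pow (n - 1 - i)).smul continuous_const
  -- S written via algebraMap
  have hS_alg : ∀ lam : ℂ,
      (∑ i ∈ Finset.range n, B ^ i * (algebraMap ℂ (X →L[ℂ] X) lam) ^ (n - 1 - i)) = S lam := by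
    intro lam
    apply Finset.sum_congr rfl
    intro i _
    rw [← map_pow, ← Algebra.commutes, Algebra.smul_def]
  -- key resolvent factorization
  have hres_formula : ∀ lam : ℂ, lam ^ n ∈ resolventSet ℂ (B ^ n) →
      resolvent B lam = resolvent (B ^ n) (lam ^ n) * S lam := by
    intro lam hmem
    set u : X →L[ℂ] X := algebraMap ℂ (X →L[ℂ] X) lam - B with hu_def
    set v : X →L[ℂ] X := algebraMap ℂ (X →L[ℂ] X) (lam ^ n) - (B ^ n) with hv_def
    have hc : Commute B (algebraMap ℂ (X →L[ℂ] X) lam) := (Algebra.commutes lam B).symm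
    have h1 : S lam * u = v := by
      rw [← hS_alg lam]
      have h := hc.geom_sum₂_mul n
      rw [hu_def, hv_def, map_pow, ← neg_sub (B ^ n), ← h, ← mul_neg, neg_sub]
    have h2 : u * S lam = v := by
      rw [← hS_alg lam]
      have h := hc.mul_geom_sum₂ n
      rw [hu_def, hv_def, map_pow, ← neg_sub (B ^ n), ← h, ← neg_mul, neg_sub]
    have hv : IsUnit v := spectrum.mem_resolventSet_iff.mp hmem
    have hcomm_vS : v * S lam = S lam * v := by
      nth_rewrite 1 [← h1]
      rw [mul_assoc, h2]
    have hcomm_invS : Ring.inverse v * S lam = S lam * Ring.inverse v := by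
      calc Ring.inverse v * S lam
          = Ring.inverse v * (S lam * (v * Ring.inverse v)) := by
            rw [Ring.mul_inverse_cancel _ hv, mul_one]
        _ = Ring.inverse v * v * (S lam * Ring.inverse v) := by
            rw [← mul_assoc (S lam), ← hcomm_vS]
            simp only [mul_assoc]
        _ = S lam * Ring.inverse v := by rw [Ring.inverse_mul_cancel _ hv, one_mul]
    have huw : u * (S lam * Ring.inverse v) = 1 := by
      rw [← mul_assoc, h2, Ring.mul_inverse_cancel _ hv]
    have hwu : (S lam * Ring.inverse v) * u = 1 := by
      rw [← hcomm_invS, mul_assoc, h1, Ring.inverse_mul_cancel _ hv]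
    have hu : IsUnit u := isUnit_iff_exists.mpr ⟨S lam * Ring.inverse v, huw, hwu⟩
    have hinv_u : Ring.inverse u = S lam * Ring.inverse v := by
      calc Ring.inverse u = Ring.inverse u * (u * (S lam * Ring.inverse v)) := by
            rw [huw, mul_one]
        _ = (Ring.inverse u * u) * (S lam * Ring.inverse v) := by rw [mul_assoc]
        _ = S lam * Ring.inverse v := by rw [Ring.inverse_mul_cancel _ hu, one_mul]
    show Ring.inverse u = Ring.inverse v * S lam
    rw [hinv_u, hcomm_invS]
  set l := nhdsWithin μ₀ {μ₀}ᶜ with hl_def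
  have e1 : ∀ᶠ lam in l, lam ≠ μ₀ := by
    filter_upwards [self_mem_nhdsWithin] with lam h using h
  have hq_tendsto : Tendsto q l (nhds (q μ₀)) :=
    (hq_cont.tendsto μ₀).mono_left nhdsWithin_le_nhds
  have e2 : ∀ᶠ lam in l, q lam ≠ 0 := hq_tendsto.eventually_ne hqμ0
  have e3 : ∀ᶠ lam in l, ‖lam ^ n - μ₀ ^ n‖ < ε := by
    have hcont : Tendsto (fun lam : ℂ => ‖lam ^ n - μ₀ ^ n‖) l (nhds 0) := by
      have h : Tendsto (fun lam : ℂ => ‖lam ^ n - μ₀ ^ n‖) (nhds μ₀) (nhds ‖μ₀ ^ n - μ₀ ^ n‖) :=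
        (((continuous_pow n).sub continuous_const).norm).tendsto μ₀
      simpa using h.mono_left nhdsWithin_le_nhds
    exact hcont.eventually_lt_const hε
  have ene : ∀ᶠ lam in l, lam ^ n ≠ μ₀ ^ n := by
    filter_upwards [e1, e2] with lam h1 h2
    intro h
    have hz := hfac lam
    rw [h, sub_self] at hz
    rcases mul_eq_zero.mp hz with h' | h'
    · exact h2 h'
    · exact h1 (sub_eq_zero.mp h')
  have emem : ∀ᶠ lam in l, lam ^ n ∈ resolventSet ℂ (B ^ n) := by
    filter_upwards [ene, e3] with lam h1 h2 using hres (lam ^ n) h1 h2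
  -- the auxiliary function and its limit
  have hpow_tendsto : Tendsto (fun lam : ℂ => lam ^ n) l
      (nhdsWithin (μ₀ ^ n) {μ₀ ^ n}ᶜ) := by
    rw [tendsto_nhdsWithin_iff]
    exact ⟨((continuous_pow n).tendsto μ₀).mono_left nhdsWithin_le_nhds, ene⟩
  have t2 : Tendsto (fun lam : ℂ => (lam ^ n - μ₀ ^ n) • resolvent (B ^ n) (lam ^ n)) l
      (nhds P₀) := hP.comp hpow_tendsto
  have t3 : Tendsto S l (nhds (S μ₀)) := (hS_cont.tendsto μ₀).mono_left nhdsWithin_le_nhds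
  have t1 : Tendsto (fun lam => (q lam)⁻¹) l (nhds (((n : ℂ) * μ₀ ^ (n - 1))⁻¹)) := by
    rw [← hqμ]
    exact hq_tendsto.inv₀ hqμ0
  have tF : Tendsto (fun lam : ℂ =>
      (q lam)⁻¹ • (((lam ^ n - μ₀ ^ n) • resolvent (B ^ n) (lam ^ n)) * S lam)) l
      (nhds (((n : ℂ) * μ₀ ^ (n - 1))⁻¹ • (P₀ * S μ₀))) :=
    t1.smul (t2.mul t3)
  have heq : (fun lam : ℂ =>
      (q lam)⁻¹ • (((lam ^ n - μ₀ ^ n) • resolvent (B ^ n) (lam ^ n)) * S lam)) =ᶠ[l]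
      (fun lam : ℂ => (lam - μ₀) • resolvent B lam) := by
    filter_upwards [e2, emem] with lam h2 hmem
    rw [hres_formula lam hmem, smul_mul_assoc, smul_smul, ← hfac lam,
      inv_mul_cancel_left₀ h2]
  constructor
  · exact tF.congr' heq
  · rintro x ⟨y, rfl⟩
    refine ⟨((n : ℂ) * μ₀ ^ (n - 1))⁻¹ • (∑ j ∈ Finset.range n, μ₀ ^ (n - 1 - j) • B ^ j) y, ?_⟩
    simp [ContinuousLinearMap.smul_apply, ContinuousLinearMap.mul_apply, map_smul, map_sum,
      ContinuousLinearMap.sum_apply]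
end

section
/- Let X be a Banach space and Θ : ℝ → X Bochner integrable and uniformly continuous, with minimal modulus of continuity ω(s) = sup{‖Θ(η₁) − Θ(η₂)‖ : |η₁ − η₂| ≤ s}. Assume ∫_{|η| > r} ‖Θ(η)‖ dη ≤ D r^{-β} for all r > 1, for some D > 0 and β > 0. Then for every t ≥ 1 and every R > 2π, ‖∫_ℝ e^{iηt} Θ(η) dη‖ ≤ R · ω(π/t) + 2^β D R^{-β}. -/
/-!
Since `exp (i (η + π/t) t) = - exp (i η t)`, translating `Θ` by half a period negates the
oscillatory integral, so twice its norm is at most `∫ ‖Θ η - Θ (η + π/t)‖`. On `|η| ≤ R` this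
integrand is at most `ω (π/t)`; on `|η| > R` it is at most `‖Θ η‖ + ‖Θ (η + π/t)‖`, and both tails
lie in `{|η| > R/2}` because `π/t ≤ π < R/2`, where the decay hypothesis applies.
-/

open MeasureTheory Real

section HalfPeriod

variable {E : Type*} [NormedAddCommGroup E] [NormedSpace ℂ E]

lemma norm_cexp_I_mul_ofReal_mul_ofReal (η t : ℝ) :
    ‖Complex.exp (Complex.I * η * t)‖ = 1 := by
  simpa [mul_assoc] using Complex.norm_exp_I_mul_ofReal (η * t)

lemma cexp_I_mul_add_pi_div_mul {t : ℝ} (ht : t ≠ 0) (η : ℝ) :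
    Complex.exp (Complex.I * ↑(η + π / t) * t) = -Complex.exp (Complex.I * η * t) := by
  have h : Complex.I * ↑(η + π / t) * t = Complex.I * η * t + π * Complex.I := by
    have ht' : (t : ℂ) ≠ 0 := by exact_mod_cast ht
    push_cast
    field_simp
  rw [h, Complex.exp_add, Complex.exp_pi_mul_I, mul_neg_one]

lemma MeasureTheory.Integrable.cexp_I_mul_mul_smul {f : ℝ → E} (hf : Integrable f) (t : ℝ) :
    Integrable fun η : ℝ => Complex.exp (Complex.I * η * t) • f η :=
  hf.bdd_smul 1 (Continuous.aestronglyMeasurable (by fun_prop))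
    (ae_of_all _ fun η => (norm_cexp_I_mul_ofReal_mul_ofReal η t).le)

lemma integral_cexp_I_mul_mul_smul_comp_add_pi_div (f : ℝ → E) {t : ℝ} (ht : t ≠ 0) :
    ∫ η : ℝ, Complex.exp (Complex.I * η * t) • f (η + π / t)
      = -∫ η : ℝ, Complex.exp (Complex.I * η * t) • f η := by
  calc ∫ η : ℝ, Complex.exp (Complex.I * η * t) • f (η + π / t)
      = ∫ η : ℝ, -(Complex.exp (Complex.I * ↑(η + π / t) * t) • f (η + π / t)) := by
        simp only [cexp_I_mul_add_pi_div_mul ht, neg_smul, neg_neg]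
    _ = -∫ η : ℝ, Complex.exp (Complex.I * η * t) • f η := by
        rw [integral_neg,
          integral_add_right_eq_self (fun η : ℝ => Complex.exp (Complex.I * η * t) • f η)]

theorem two_mul_norm_integral_cexp_I_mul_mul_smul_le {f : ℝ → E} (hf : Integrable f) {t : ℝ}
    (ht : t ≠ 0) :
    2 * ‖∫ η : ℝ, Complex.exp (Complex.I * η * t) • f η‖ ≤ ∫ η, ‖f η - f (η + π / t)‖ := by
  have h2 : (2 : ℂ) • ∫ η : ℝ, Complex.exp (Complex.I * η * t) • f η
      = ∫ η : ℝ, Complex.exp (Complex.I * η * t) • (f η - f (η + π / t)) := by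
    simp_rw [smul_sub]
    rw [integral_sub (hf.cexp_I_mul_mul_smul t) ((hf.comp_add_right _).cexp_I_mul_mul_smul t),
      integral_cexp_I_mul_mul_smul_comp_add_pi_div f ht, sub_neg_eq_add, two_smul]
  calc 2 * ‖∫ η : ℝ, Complex.exp (Complex.I * η * t) • f η‖
      = ‖∫ η : ℝ, Complex.exp (Complex.I * η * t) • (f η - f (η + π / t))‖ := by
        rw [← h2, norm_smul]
        norm_num
    _ ≤ ∫ η : ℝ, ‖Complex.exp (Complex.I * η * t) • (f η - f (η + π / t))‖ :=
        norm_integral_le_integral_norm _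
    _ = ∫ η, ‖f η - f (η + π / t)‖ := by
        simp_rw [norm_smul, norm_cexp_I_mul_ofReal_mul_ofReal, one_mul]

end HalfPeriod

section Tails

variable {F : Type*} [NormedAddCommGroup F] {f : ℝ → F}

lemma integral_le_two_mul_mul_add_setIntegral_tail {g : ℝ → ℝ} (hg : Integrable g) {R C : ℝ}
    (hR : 0 ≤ R) (hgC : ∀ η, |η| ≤ R → g η ≤ C) :
    ∫ η, g η ≤ 2 * R * C + ∫ η in {η : ℝ | R < |η|}, g η := by
  have hcompl : (Set.Icc (-R) R)ᶜ = {η : ℝ | R < |η|} := by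
    ext η
    simp only [Set.mem_compl_iff, Set.mem_Icc, Set.mem_ofPred_eq, lt_abs]
    grind
  rw [← integral_add_compl measurableSet_Icc hg, hcompl]
  gcongr
  calc ∫ η in Set.Icc (-R) R, g η ≤ ∫ η in Set.Icc (-R) R, C :=
        setIntegral_mono_on hg.integrableOn (integrableOn_const measure_Icc_lt_top.ne) measurableSet_Icc
          fun η hη => hgC η (abs_le.2 hη)
    _ = 2 * R * C := by
        rw [setIntegral_const, Real.volume_real_Icc_of_le (by linarith), smul_eq_mul]
        ring

lemma setIntegral_tail_norm_comp_add_le (hf : Integrable f) {r R s : ℝ} (h : r + |s| ≤ R) :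
    ∫ η in {η : ℝ | R < |η|}, ‖f (η + s)‖ ≤ ∫ y in {y : ℝ | r < |y|}, ‖f y‖ := by
  have hpre : (· + s) ⁻¹' {y : ℝ | R < |y - s|} = {η : ℝ | R < |η|} := by
    ext η
    simp
  have hsub : {y : ℝ | R < |y - s|} ⊆ {y : ℝ | r < |y|} := fun y hy => by
    have := abs_sub y s
    simp only [Set.mem_ofPred_eq] at hy ⊢
    linarith
  rw [← hpre, (measurePreserving_add_right volume s).setIntegral_preimage_emb
    (MeasurableEquiv.addRight s).measurableEmbedding (fun y => ‖f y‖)]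
  exact setIntegral_mono_set hf.norm.integrableOn (ae_of_all _ fun _ => norm_nonneg _)
    hsub.eventuallyLE

lemma setIntegral_tail_norm_sub_comp_add_le (hf : Integrable f) {r R s : ℝ} (h : r + |s| ≤ R) :
    ∫ η in {η : ℝ | R < |η|}, ‖f η - f (η + s)‖ ≤ 2 * ∫ y in {y : ℝ | r < |y|}, ‖f y‖ := by
  have hsub : {η : ℝ | R < |η|} ⊆ {y : ℝ | r < |y|} := fun η hη => by
    simp only [Set.mem_ofPred_eq] at hη ⊢
    linarith [abs_nonneg s]
  calc ∫ η in {η : ℝ | R < |η|}, ‖f η - f (η + s)‖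
      ≤ ∫ η in {η : ℝ | R < |η|}, (‖f η‖ + ‖f (η + s)‖) :=
        setIntegral_mono (hf.sub (hf.comp_add_right s)).norm.integrableOn
          (hf.norm.add (hf.comp_add_right s).norm).integrableOn fun η => norm_sub_le _ _
    _ = (∫ η in {η : ℝ | R < |η|}, ‖f η‖) + ∫ η in {η : ℝ | R < |η|}, ‖f (η + s)‖ :=
        integral_add hf.norm.integrableOn (hf.comp_add_right s).norm.integrableOn
    _ ≤ 2 * ∫ y in {y : ℝ | r < |y|}, ‖f y‖ := by
        rw [two_mul]
        gcongr ?_ + ?_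
        · exact setIntegral_mono_set hf.norm.integrableOn (ae_of_all _ fun _ => norm_nonneg _)
            hsub.eventuallyLE
        · exact setIntegral_tail_norm_comp_add_le hf h

end Tails

theorem stmt11_general {X : Type*} [NormedAddCommGroup X] [NormedSpace ℂ X]
    (Θ : ℝ → X) (hΘ : Integrable Θ)
    (ω : ℝ → ℝ)
    (hω : ∀ s, 0 ≤ s → ∀ η₁ η₂ : ℝ, |η₁ - η₂| ≤ s → ‖Θ η₁ - Θ η₂‖ ≤ ω s)
    (D β : ℝ)
    (htail : ∀ r : ℝ, 1 < r → ∫ η in {η : ℝ | r < |η|}, ‖Θ η‖ ≤ D * r ^ (-β))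
    (t R : ℝ) (ht : 1 ≤ t) (hR : 2 * Real.pi < R) :
    ‖∫ η : ℝ, Complex.exp (Complex.I * (η : ℂ) * (t : ℂ)) • Θ η‖
      ≤ R * ω (Real.pi / t) + (2 : ℝ) ^ β * D * R ^ (-β) := by
  have ht0 : 0 < t := by linarith
  have hR0 : 0 < R := by linarith [pi_pos]
  have hs0 : 0 ≤ π / t := by positivity
  have hsπ : π / t ≤ π := div_le_self pi_pos.le ht
  have hinner := integral_le_two_mul_mul_add_setIntegral_tail
    (g := fun η => ‖Θ η - Θ (η + π / t)‖) (hΘ.sub (hΘ.comp_add_right (π / t))).norm hR0.le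
    fun η _ => hω _ hs0 _ _ (by simp [abs_of_nonneg hs0])
  have houter : ∫ η in {η : ℝ | R < |η|}, ‖Θ η - Θ (η + π / t)‖
      ≤ 2 * ((2 : ℝ) ^ β * D * R ^ (-β)) :=
    calc ∫ η in {η : ℝ | R < |η|}, ‖Θ η - Θ (η + π / t)‖
        ≤ 2 * ∫ y in {y : ℝ | R / 2 < |y|}, ‖Θ y‖ :=
          setIntegral_tail_norm_sub_comp_add_le hΘ (by rw [abs_of_nonneg hs0]; linarith)
      _ ≤ 2 * (D * (R / 2) ^ (-β)) := by gcongr; exact htail _ (by linarith [pi_gt_three])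
      _ = 2 * ((2 : ℝ) ^ β * D * R ^ (-β)) := by
          rw [div_rpow hR0.le zero_le_two, rpow_neg zero_le_two]
          field_simp
  linarith [two_mul_norm_integral_cexp_I_mul_mul_smul_le hΘ ht0.ne']

theorem stmt11 {X : Type*} [NormedAddCommGroup X] [NormedSpace ℂ X] [CompleteSpace X]
    (Θ : ℝ → X) (hΘ : Integrable Θ) (hUC : UniformContinuous Θ)
    (ω : ℝ → ℝ)
    (hω : ∀ s, 0 ≤ s → ∀ η₁ η₂ : ℝ, |η₁ - η₂| ≤ s → ‖Θ η₁ - Θ η₂‖ ≤ ω s)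
    (D β : ℝ) (hD : 0 < D) (hβ : 0 < β)
    (htail : ∀ r : ℝ, 1 < r → ∫ η in {η : ℝ | r < |η|}, ‖Θ η‖ ≤ D * r ^ (-β))
    (t R : ℝ) (ht : 1 ≤ t) (hR : 2 * Real.pi < R) :
    ‖∫ η : ℝ, Complex.exp (Complex.I * (η : ℂ) * (t : ℂ)) • Θ η‖
      ≤ R * ω (Real.pi / t) + (2 : ℝ) ^ β * D * R ^ (-β) :=
  stmt11_general Θ hΘ ω hω D β htail t R ht hR
end
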